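/- Let r be a regular reward function, p ∈ (0,1), s := 1/(1−p), and ω := η_s^{-1}. Then for every x ≥ 0, r'(ω(x)) ≥ (1−p)·r'(ω(x − ω(x))), with equality whenever ω(x) ≥ τ_s; consequently the infimum over x ≥ 0 of the ratio r'(ω(x)) / r'(ω(x − ω(x))) equals 1−p, i.e., the universal greed index ι(ω) := 1 − inf_{x≥0} r'(ω(x))/r'(ω(x−ω(x))) equals p. -/

import Mathlib

open Set Filter MeasureTheory

/-- A regular reward function `r` with derivative `r'`: `r : [0,∞) → [0,∞)` is
nondecreasing, Lipschitz, strictly concave, differentiable, with `r 0 = 0`; its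
derivative `r'` is continuous, strictly decreasing, positive, and tends to `0` at `+∞`.
For each `s ≥ 1`, `τ s` is the unique point with `r' (τ s) = r' 0 / s`, and
`κ s : [τ s, ∞) → [0, ∞)` is defined by the relation `r' (κ s x) = s * r' x`
(for `s = 1` these reduce to `τ 1 = 0` and `κ 1 = id`); regularity means `κ s` is
convex on `[τ s, ∞)` for all `s > 1`. -/
structure RegularReward where
  r : ℝ → ℝ
  r' : ℝ → ℝ
  r_zero : r 0 = 0
  r_nonneg : ∀ x : ℝ, 0 ≤ x → 0 ≤ r x
  r_mono : MonotoneOn r (Ici (0 : ℝ))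
  r_lip : ∃ K : NNReal, LipschitzOnWith K r (Ici (0 : ℝ))
  r_strictConcave : StrictConcaveOn ℝ (Ici (0 : ℝ)) r
  r_hasDeriv : ∀ x : ℝ, 0 ≤ x → HasDerivWithinAt r (r' x) (Ici (0 : ℝ)) x
  deriv_cont : ContinuousOn r' (Ici (0 : ℝ))
  deriv_strictAnti : StrictAntiOn r' (Ici (0 : ℝ))
  deriv_pos : ∀ x : ℝ, 0 ≤ x → 0 < r' x
  deriv_tendsto_zero : Tendsto r' atTop (nhds 0)
  τ : ℝ → ℝ
  κ : ℝ → ℝ → ℝ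
  τ_nonneg : ∀ s : ℝ, 1 ≤ s → 0 ≤ τ s
  τ_spec : ∀ s : ℝ, 1 ≤ s → r' (τ s) = r' 0 / s
  κ_nonneg : ∀ s : ℝ, 1 ≤ s → ∀ x : ℝ, τ s ≤ x → 0 ≤ κ s x
  κ_spec : ∀ s : ℝ, 1 ≤ s → ∀ x : ℝ, τ s ≤ x → r' (κ s x) = s * r' x
  κ_convex : ∀ s : ℝ, 1 < s → ConvexOn ℝ (Ici (τ s)) (κ s)

namespace RegularReward

/-- The extension `κ̄_s (x) := κ_s (max x τ_s)` of `κ_s` to `[0, ∞)`. -/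
noncomputable def kbar (R : RegularReward) (s : ℝ) (x : ℝ) : ℝ :=
  R.κ s (max x (R.τ s))

/-- `M_s(x) = ⌈ln (r' 0 / r' x) / ln s⌉`. -/
noncomputable def M (R : RegularReward) (s : ℝ) (x : ℝ) : ℕ :=
  ⌈Real.log (R.r' 0 / R.r' x) / Real.log s⌉₊

/-- `M̃_s(x) = ⌊ln (r' 0 / r' x) / ln s⌋ + 1`. -/
noncomputable def Mt (R : RegularReward) (s : ℝ) (x : ℝ) : ℕ :=
  ⌊Real.log (R.r' 0 / R.r' x) / Real.log s⌋₊ + 1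

/-- `η_s(x) := ∑_{i=1}^∞ κ̄_s^{(i-1)}(x)`, a finite sum since `κ̄_s^{(i)}(x) = 0` for
`i ≥ M_s(x)`. -/
noncomputable def η (R : RegularReward) (s : ℝ) (x : ℝ) : ℝ :=
  ∑' i : ℕ, (R.kbar s)^[i] x

end RegularReward

/-! From `η_s y = y + η_s (κ̄_s y)` one reads off `ω (x - ω x) = κ̄_s (ω x)`. Above `τ_s`,
`κ̄_s` multiplies `r'` by `s = 1/(1-p)`, which is the equality case; below `τ_s` it vanishes
and `r' 0 = s r' τ_s ≤ s r' (ω x)`. The infimum is attained at `x = τ_s`, which `ω` fixes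
because `κ̄_s τ_s = 0`. -/

namespace RegularReward

variable (R : RegularReward) {s y : ℝ}

theorem κ_τ_eq_zero (hs : 1 ≤ s) : R.κ s (R.τ s) = 0 := by
  refine R.deriv_strictAnti.injOn (R.κ_nonneg s hs _ le_rfl) (mem_Ici.mpr le_rfl) ?_
  rw [R.κ_spec s hs _ le_rfl, R.τ_spec s hs]
  field_simp

theorem kbar_nonneg (hs : 1 ≤ s) (y : ℝ) : 0 ≤ R.kbar s y :=
  R.κ_nonneg s hs _ (le_max_right _ _)

theorem kbar_eq_zero_of_le_τ (hs : 1 ≤ s) (hy : y ≤ R.τ s) : R.kbar s y = 0 := by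
  rw [kbar, max_eq_right hy, R.κ_τ_eq_zero hs]

theorem deriv_kbar_of_τ_le (hs : 1 ≤ s) (hy : R.τ s ≤ y) :
    R.r' (R.kbar s y) = s * R.r' y := by
  rw [kbar, max_eq_left hy]
  exact R.κ_spec s hs y hy

theorem deriv_kbar_le (hs : 1 ≤ s) (hy : 0 ≤ y) : R.r' (R.kbar s y) ≤ s * R.r' y := by
  rcases le_total (R.τ s) y with hτy | hyτ
  · exact (R.deriv_kbar_of_τ_le hs hτy).le
  · have hτ0 := R.τ_nonneg s hs
    have hs0 : (0 : ℝ) < s := by linarith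
    calc R.r' (R.kbar s y) = s * R.r' (R.τ s) := by
          rw [R.kbar_eq_zero_of_le_τ hs hyτ, R.τ_spec s hs]; field_simp
      _ ≤ s * R.r' y := by
          gcongr
          exact R.deriv_strictAnti.antitoneOn hy hτ0 hyτ

theorem iterate_kbar_zero (hs : 1 ≤ s) (i : ℕ) : (R.kbar s)^[i] 0 = 0 :=
  Function.iterate_fixed (R.kbar_eq_zero_of_le_τ hs (R.τ_nonneg s hs)) i

/-- Each application of `κ̄_s` above `τ_s` multiplies `r'` by `s`, and `r'` never exceeds
`r' 0 = s * r' τ_s`; so the orbit reaches `[0, τ_s]`, and then `0`, after finitely many steps. -/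
theorem iterate_kbar_succ_eq_zero (hs : 1 ≤ s) (n : ℕ) (hy : 0 ≤ y)
    (h : R.r' (R.τ s) < s ^ n * R.r' y) : (R.kbar s)^[n + 1] y = 0 := by
  induction n generalizing y with
  | zero =>
    rw [pow_zero, one_mul] at h
    have hyτ : y < R.τ s := (R.deriv_strictAnti.lt_iff_gt (R.τ_nonneg s hs) hy).mp h
    exact R.kbar_eq_zero_of_le_τ hs hyτ.le
  | succ n ih =>
    rw [Function.iterate_succ_apply]
    rcases le_total y (R.τ s) with hyτ | hτy
    · rw [R.kbar_eq_zero_of_le_τ hs hyτ]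
      exact R.iterate_kbar_zero hs _
    · refine ih (R.kbar_nonneg hs y) ?_
      rw [R.deriv_kbar_of_τ_le hs hτy]
      rwa [pow_succ, mul_assoc] at h

theorem eventually_iterate_kbar_eq_zero (hs : 1 < s) (hy : 0 ≤ y) :
    ∃ N : ℕ, ∀ i, N ≤ i → (R.kbar s)^[i] y = 0 := by
  have hr'y := R.deriv_pos y hy
  obtain ⟨n, hn⟩ := pow_unbounded_of_one_lt (R.r' (R.τ s) / R.r' y) hs
  rw [div_lt_iff₀ hr'y] at hn
  refine ⟨n + 1, fun i hi => ?_⟩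
  obtain ⟨k, rfl⟩ := Nat.exists_eq_add_of_le hi
  rw [Nat.add_comm, Function.iterate_add_apply, R.iterate_kbar_succ_eq_zero hs.le n hy hn,
    R.iterate_kbar_zero hs.le]

theorem η_eq_sum_range {N : ℕ} (hN : ∀ i, N ≤ i → (R.kbar s)^[i] y = 0) :
    R.η s y = ∑ i ∈ Finset.range N, (R.kbar s)^[i] y :=
  tsum_eq_sum fun i hi => hN i (not_lt.mp (mt Finset.mem_range.mpr hi))

theorem η_zero (hs : 1 ≤ s) : R.η s 0 = 0 := by
  simp [η, R.iterate_kbar_zero hs]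

theorem η_eq_add_η_kbar (hs : 1 < s) (hy : 0 ≤ y) :
    R.η s y = y + R.η s (R.kbar s y) := by
  obtain ⟨N, hN⟩ := R.eventually_iterate_kbar_eq_zero hs hy
  rw [R.η_eq_sum_range (N := N + 1) fun i hi => hN i (by omega),
    R.η_eq_sum_range (N := N) fun i hi => hN (i + 1) (by omega), Finset.sum_range_succ']
  simp only [Function.iterate_succ_apply, Function.iterate_zero_apply]
  ring

theorem η_τ (hs : 1 < s) : R.η s (R.τ s) = R.τ s := by
  rw [R.η_eq_add_η_kbar hs (R.τ_nonneg s hs.le), R.kbar_eq_zero_of_le_τ hs.le le_rfl,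
    R.η_zero hs.le, add_zero]

theorem inv_η_sub_eq_kbar (hs : 1 < s) {ω : ℝ → ℝ} {x : ℝ} (hωx : 0 ≤ ω x)
    (hω_rightInv : R.η s (ω x) = x) (hω_leftInv : ∀ y, 0 ≤ y → ω (R.η s y) = y) :
    ω (x - ω x) = R.kbar s (ω x) := by
  have h : x - ω x = R.η s (R.kbar s (ω x)) := by
    linarith [R.η_eq_add_η_kbar hs hωx]
  rw [h, hω_leftInv _ (R.kbar_nonneg hs.le _)]

end RegularReward

/-- **The universal greed index of `ω` equals `p`** (Theorem 4, part 3). Let `r` be a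
regular reward function, `p ∈ (0,1)`, `s = 1/(1-p)`, and `ω = η_s⁻¹`. Then for every
`x ≥ 0`, `r' (ω x) ≥ (1-p) · r' (ω (x - ω x))`, with equality whenever `ω x ≥ τ_s`;
the infimum over `x ≥ 0` of `r' (ω x) / r' (ω (x - ω x))` equals `1 - p`, so the
universal greed index `ι(ω) = 1 - inf_{x ≥ 0} r'(ω x)/r'(ω (x - ω x))` equals `p`. -/
theorem omega_greed_index (R : RegularReward) (p : ℝ) (hp : p ∈ Ioo (0 : ℝ) 1)
    (s : ℝ) (hs : s = 1 / (1 - p))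
    (ω : ℝ → ℝ)
    (hω_nonneg : ∀ x : ℝ, 0 ≤ x → 0 ≤ ω x)
    (hω_rightInv : ∀ x : ℝ, 0 ≤ x → R.η s (ω x) = x)
    (hω_leftInv : ∀ y : ℝ, 0 ≤ y → ω (R.η s y) = y) :
    (∀ x : ℝ, 0 ≤ x → (1 - p) * R.r' (ω (x - ω x)) ≤ R.r' (ω x)) ∧
      (∀ x : ℝ, 0 ≤ x → R.τ s ≤ ω x →
        R.r' (ω x) = (1 - p) * R.r' (ω (x - ω x))) ∧
      (⨅ x : Ici (0 : ℝ), R.r' (ω x.1) / R.r' (ω (x.1 - ω x.1))) = 1 - p ∧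
      1 - (⨅ x : Ici (0 : ℝ), R.r' (ω x.1) / R.r' (ω (x.1 - ω x.1))) = p := by
  obtain ⟨hp0, hp1⟩ := hp
  have hs1 : 1 < s := by
    rw [hs, lt_div_iff₀ (by linarith)]
    linarith
  have hps : 1 - p = s⁻¹ := by rw [hs, one_div, inv_inv]
  have hs0 : 0 < s := by linarith
  have hstep : ∀ x, 0 ≤ x → ω (x - ω x) = R.kbar s (ω x) := fun x hx =>
    R.inv_η_sub_eq_kbar hs1 (hω_nonneg x hx) (hω_rightInv x hx) hω_leftInv
  have hlower : ∀ x : ℝ, 0 ≤ x → (1 - p) * R.r' (ω (x - ω x)) ≤ R.r' (ω x) := by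
    intro x hx
    rw [hstep x hx, hps, inv_mul_le_iff₀ hs0]
    exact R.deriv_kbar_le hs1.le (hω_nonneg x hx)
  have hequal : ∀ x : ℝ, 0 ≤ x → R.τ s ≤ ω x →
      R.r' (ω x) = (1 - p) * R.r' (ω (x - ω x)) := by
    intro x hx hτx
    rw [hstep x hx, R.deriv_kbar_of_τ_le hs1.le hτx, hps, inv_mul_cancel_left₀ hs0.ne']
  have hratio : ∀ x : Ici (0 : ℝ), 1 - p ≤ R.r' (ω x.1) / R.r' (ω (x.1 - ω x.1)) := by
    rintro ⟨x, hx⟩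
    rw [le_div_iff₀ (hstep x hx ▸ R.deriv_pos _ (R.kbar_nonneg hs1.le _))]
    exact hlower x hx
  have hτ0 := R.τ_nonneg s hs1.le
  have hωτ : ω (R.τ s) = R.τ s := by
    simpa only [R.η_τ hs1] using hω_leftInv _ hτ0
  have hinf : (⨅ x : Ici (0 : ℝ), R.r' (ω x.1) / R.r' (ω (x.1 - ω x.1))) = 1 - p := by
    refine IsGLB.ciInf_eq (IsLeast.isGLB ⟨⟨⟨R.τ s, hτ0⟩, ?_⟩, ?_⟩)
    · have hden := hstep _ hτ0 ▸ R.deriv_pos _ (R.kbar_nonneg hs1.le (ω (R.τ s)))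
      rw [div_eq_iff hden.ne']
      exact hequal _ hτ0 hωτ.ge
    · rintro _ ⟨x, rfl⟩
      exact hratio x
  exact ⟨hlower, hequal, hinf, by rw [hinf]; ring⟩
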